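/- Fix nonnegative integers k_1, k_2, k_3, k_4 and set k = k_1 + k_2 + k_3. Let ν^{(1)} be the partition (k, k_1, k_1) and ν^{(2)} the partition (k_1+k_2, k_1), with all riggings equal to 0 except the rigging k_4 attached to the part of length k in ν^{(1)}. Then the cocharge of this rigged configuration equals 3k_1 + k_2 + k_3 + k_4, which also equals |ν^{(1)}| + k_4. -/
import Mathlib


/-- The normalized symmetric bilinear form on the simple roots of the classical
subalgebra `G₂` of `D₄⁽³⁾` (indices `0,1` standing for `1,2`):
`(α₁|α₁) = 2`, `(α₁|α₂) = (α₂|α₁) = -3`, `(α₂|α₂) = 6`. -/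
def bilinG2 : Fin 2 → Fin 2 → ℤ :=
  fun a b => if a = b then (if a = 0 then 2 else 6) else -3

/-- The cocharge of a configuration with part multiplicities `m`:
`cc(ν) = (1/2) Σ_{a,b} Σ_{i,j} (α_a|α_b) min(i,j) m_i^{(a)} m_j^{(b)}`. -/
noncomputable def cochargeConfig (B : Fin 2 → Fin 2 → ℤ) (m : Fin 2 → ℕ → ℕ) : ℚ :=
  (1 / 2 : ℚ) * ∑ a : Fin 2, ∑ b : Fin 2, ∑ᶠ i : ℕ, ∑ᶠ j : ℕ,
    (B a b : ℚ) * ((min i j : ℕ) : ℚ) * (m a i : ℚ) * (m b j : ℚ)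

lemma finsum_count (S : Multiset ℕ) (g : ℕ → ℚ) :
    (∑ᶠ j : ℕ, g j * (Multiset.count j S : ℚ)) = (S.map g).sum := by
  have hsub : (Function.support fun j => g j * (Multiset.count j S : ℚ)) ⊆ ↑S.toFinset := by
    intro j hj
    simp only [Function.mem_support] at hj
    simp only [Finset.coe_sort_coe, Multiset.mem_toFinset, Finset.mem_coe]
    by_contra h
    rw [Multiset.count_eq_zero_of_notMem h] at hj
    simp at hj
  rw [finsum_eq_finset_sum_of_support_subset _ hsub, Finset.sum_multiset_map_count]
  refine Finset.sum_congr rfl fun i _ => ?_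
  rw [nsmul_eq_mul]; ring

lemma double_finsum (B : ℤ) (Sa Sb : Multiset ℕ) :
    (∑ᶠ i : ℕ, ∑ᶠ j : ℕ,
      (B : ℚ) * ((min i j : ℕ) : ℚ) * (Multiset.count i Sa : ℚ) * (Multiset.count j Sb : ℚ))
    = (Sa.map (fun i => (Sb.map (fun j => (B : ℚ) * ((min i j : ℕ) : ℚ))).sum)).sum := by
  have h1 : ∀ i : ℕ, (∑ᶠ j : ℕ,
      (B : ℚ) * ((min i j : ℕ) : ℚ) * (Multiset.count i Sa : ℚ) * (Multiset.count j Sb : ℚ))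
      = (Sb.map (fun j => (B : ℚ) * ((min i j : ℕ) : ℚ))).sum * (Multiset.count i Sa : ℚ) := by
    intro i
    rw [finsum_count Sb (fun j => (B : ℚ) * ((min i j : ℕ) : ℚ) * (Multiset.count i Sa : ℚ))]
    rw [← Multiset.sum_map_mul_right]
  simp_rw [h1]
  exact finsum_count Sa _

/-- The cocharge of the rigged configuration `ν⁽¹⁾ = (k, k₁, k₁)`,
`ν⁽²⁾ = (k₁+k₂, k₁)` (with `k = k₁+k₂+k₃`), all riggings `0` except the rigging
`k₄` on the part of length `k` of `ν⁽¹⁾`, equals `3k₁ + k₂ + k₃ + k₄ = |ν⁽¹⁾| + k₄`. -/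
theorem stmt5 (k1 k2 k3 k4 : ℕ) :
    let k := k1 + k2 + k3
    let m : Fin 2 → ℕ → ℕ := fun a i =>
      if a = 0 then Multiset.count i ({k, k1, k1} : Multiset ℕ)
      else Multiset.count i ({k1 + k2, k1} : Multiset ℕ)
    cochargeConfig bilinG2 m + (k4 : ℚ) = ((3 * k1 + k2 + k3 + k4 : ℕ) : ℚ) ∧
    cochargeConfig bilinG2 m + (k4 : ℚ) = ((k + k1 + k1 : ℕ) : ℚ) + (k4 : ℚ) := by
  intro k m
  have hcc : cochargeConfig bilinG2 m = ((3 * k1 + k2 + k3 : ℕ) : ℚ) := by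
    simp only [cochargeConfig, bilinG2, Fin.sum_univ_two, m, reduceIte,
      Fin.isValue, one_ne_zero, reduceCtorEq]
    rw [if_neg (by decide : ¬ (0:Fin 2) = 1)]
    rw [double_finsum 2, double_finsum (-3), double_finsum (-3), double_finsum 6]
    have hk : k = k1 + k2 + k3 := rfl
    have h1 : min k k1 = k1 := by omega
    have h2 : min k1 k = k1 := by omega
    have h3 : min k k = k := by omega
    have h4 : min k1 k1 = k1 := by omega
    have h5 : min k (k1 + k2) = k1 + k2 := by omega
    have h6 : min (k1 + k2) k = k1 + k2 := by omega
    have h7 : min k1 (k1 + k2) = k1 := by omega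
    have h8 : min (k1 + k2) k1 = k1 := by omega
    have h9 : min (k1 + k2) (k1 + k2) = k1 + k2 := by omega
    simp only [Multiset.insert_eq_cons, Multiset.map_cons, Multiset.sum_cons,
      Multiset.map_singleton, Multiset.sum_singleton, h1, h2, h3, h4, h5, h6, h7, h8, h9]
    rw [hk]
    push_cast
    ring
  refine ⟨?_, ?_⟩ <;> rw [hcc] <;>
    (try rw [show k = k1 + k2 + k3 from rfl]) <;> push_cast <;> ring
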